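/- arXiv:2107.10082 — 5 statements merged into one kernel-verified Lean document; each statement's English description precedes it below -/
import Mathlib

section
/- There exists a constant C > 0 such that for all t > 0, ∫_{π}^{∞} ∫_{ℝ²} exp(−t(ξ²+η²)/(ξ²+η²+ζ²)²) (ξ²+η²+ζ²)^{−3} dξ dη dζ ≤ C (max{1, t})^{−1}. -/
/-!
Split according to whether `ξ² + η² ≤ ζ²`. There the denominator is comparable to `ζ²`, so the
exponential is at most a Gaussian in `(ξ, η)` of variance `~ ζ⁴ / t`; elsewhere `e^{-x} ≤ 1 / x`
trades the exponential for a factor `2 / t`, because `ξ² + η²` is then at least half the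
denominator. The sum of the two bounds is a sum of products of a function of `ξ` and one of `η`,
so the integral over `(ξ, η)` at fixed `ζ` is `O(1 / (t ζ²))`, which is integrable over `ζ ≥ π`.
For `t ≤ 1` the crude bound `e^{…} ≤ 1` gives `O(1 / ζ⁴)` instead.
-/

open MeasureTheory Real

noncomputable def decayIntegrand (t ξ η ζ : ℝ) : ℝ :=
  exp (-t * (ξ ^ 2 + η ^ 2) / (ξ ^ 2 + η ^ 2 + ζ ^ 2) ^ 2) / (ξ ^ 2 + η ^ 2 + ζ ^ 2) ^ 3

lemma inv_sq_add_sq_eq {c : ℝ} (hc : c ≠ 0) (x : ℝ) :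
    (x ^ 2 + c ^ 2)⁻¹ = (c ^ 2)⁻¹ * (1 + (x / c) ^ 2)⁻¹ := by
  field_simp
  ring

lemma integrable_inv_sq_add_sq {c : ℝ} (hc : c ≠ 0) :
    Integrable fun x : ℝ => (x ^ 2 + c ^ 2)⁻¹ := by
  simp_rw [inv_sq_add_sq_eq hc]
  exact (integrable_inv_one_add_sq.comp_div hc).const_mul _

lemma integral_univ_inv_sq_add_sq {c : ℝ} (hc : c ≠ 0) :
    ∫ x : ℝ, (x ^ 2 + c ^ 2)⁻¹ = π / |c| := by
  simp_rw [inv_sq_add_sq_eq hc]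
  rw [integral_const_mul, Measure.integral_comp_div (fun y : ℝ => (1 + y ^ 2)⁻¹) c,
    integral_univ_inv_one_add_sq, smul_eq_mul, ← sq_abs c]
  field_simp

lemma inv_sq_eqOn_rpow_neg_two {a : ℝ} (ha : 0 ≤ a) :
    Set.EqOn (fun x : ℝ => (x ^ 2)⁻¹) (fun x => x ^ (-2 : ℝ)) (Set.Ioi a) := fun x hx => by
  simp [rpow_neg (ha.trans (le_of_lt hx))]

lemma integrableOn_Ici_inv_sq {a : ℝ} (ha : 0 < a) :
    IntegrableOn (fun x : ℝ => (x ^ 2)⁻¹) (Set.Ici a) := by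
  rw [integrableOn_Ici_iff_integrableOn_Ioi]
  exact (integrableOn_Ioi_rpow_of_lt (by norm_num) ha).congr_fun
    (inv_sq_eqOn_rpow_neg_two ha.le).symm measurableSet_Ioi

lemma integral_Ici_inv_sq {a : ℝ} (ha : 0 < a) : ∫ x in Set.Ici a, (x ^ 2)⁻¹ = a⁻¹ := by
  rw [integral_Ici_eq_integral_Ioi,
    setIntegral_congr_fun measurableSet_Ioi (inv_sq_eqOn_rpow_neg_two ha.le),
    integral_Ioi_rpow_of_lt (by norm_num) ha]
  norm_num [rpow_neg_one]

lemma exp_neg_le_inv {x : ℝ} (hx : 0 < x) : exp (-x) ≤ x⁻¹ := by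
  rw [exp_neg]
  exact inv_anti₀ hx (by linarith [add_one_le_exp x])

section IteratedIntegral

variable {α β : Type*} [MeasurableSpace α] [MeasurableSpace β] {μ : Measure α} {ν : Measure β}
  {f : α → β → ℝ}

lemma integral_integral_le_of_le_mul {g : α → ℝ} {h : β → ℝ} (hf : ∀ x y, 0 ≤ f x y)
    (hfgh : ∀ x y, f x y ≤ g x * h y) (hg : Integrable g μ) (hh : Integrable h ν) :
    ∫ x, ∫ y, f x y ∂ν ∂μ ≤ (∫ x, g x ∂μ) * ∫ y, h y ∂ν := by
  have hslice (x : α) : ∫ y, f x y ∂ν ≤ g x * ∫ y, h y ∂ν := by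
    rw [← integral_const_mul]
    exact integral_mono_of_nonneg (ae_of_all _ (hf x)) (hh.const_mul _) (ae_of_all _ (hfgh x))
  rw [← integral_mul_const]
  exact integral_mono_of_nonneg (ae_of_all _ fun x => integral_nonneg (hf x))
    (hg.mul_const _) (ae_of_all _ hslice)

lemma integral_integral_le_of_le_mul_add_mul {g₁ g₂ : α → ℝ} {h₁ h₂ : β → ℝ}
    (hf : ∀ x y, 0 ≤ f x y) (hfgh : ∀ x y, f x y ≤ g₁ x * h₁ y + g₂ x * h₂ y)
    (hg₁ : Integrable g₁ μ) (hg₂ : Integrable g₂ μ) (hh₁ : Integrable h₁ ν)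
    (hh₂ : Integrable h₂ ν) :
    ∫ x, ∫ y, f x y ∂ν ∂μ ≤ (∫ x, g₁ x ∂μ) * (∫ y, h₁ y ∂ν) + (∫ x, g₂ x ∂μ) * ∫ y, h₂ y ∂ν := by
  have hslice (x : α) : ∫ y, f x y ∂ν ≤ g₁ x * (∫ y, h₁ y ∂ν) + g₂ x * ∫ y, h₂ y ∂ν := by
    rw [← integral_const_mul, ← integral_const_mul,
      ← integral_add (hh₁.const_mul _) (hh₂.const_mul _)]
    exact integral_mono_of_nonneg (ae_of_all _ (hf x))
      ((hh₁.const_mul _).add (hh₂.const_mul _)) (ae_of_all _ (hfgh x))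
  rw [← integral_mul_const, ← integral_mul_const,
    ← integral_add (hg₁.mul_const _) (hg₂.mul_const _)]
  exact integral_mono_of_nonneg (ae_of_all _ fun x => integral_nonneg (hf x))
    ((hg₁.mul_const _).add (hg₂.mul_const _)) (ae_of_all _ hslice)

end IteratedIntegral

section DecayIntegrand

variable {t ξ η ζ : ℝ}

lemma decayIntegrand_nonneg : 0 ≤ decayIntegrand t ξ η ζ := by
  unfold decayIntegrand
  positivity

lemma decayIntegrand_le_inv_mul_inv_mul_inv (ht : 0 ≤ t) (hζ : ζ ≠ 0) :
    decayIntegrand t ξ η ζ ≤ (ζ ^ 2)⁻¹ * (ξ ^ 2 + ζ ^ 2)⁻¹ * (η ^ 2 + ζ ^ 2)⁻¹ := by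
  have hexp : exp (-t * (ξ ^ 2 + η ^ 2) / (ξ ^ 2 + η ^ 2 + ζ ^ 2) ^ 2) ≤ 1 :=
    exp_le_one_iff.2 (div_nonpos_of_nonpos_of_nonneg (by nlinarith [sq_nonneg ξ, sq_nonneg η])
      (by positivity))
  have hprod : ζ ^ 2 * (ξ ^ 2 + ζ ^ 2) * (η ^ 2 + ζ ^ 2) ≤ (ξ ^ 2 + η ^ 2 + ζ ^ 2) ^ 3 := by
    calc ζ ^ 2 * (ξ ^ 2 + ζ ^ 2) * (η ^ 2 + ζ ^ 2)
        ≤ (ξ ^ 2 + η ^ 2 + ζ ^ 2) * (ξ ^ 2 + η ^ 2 + ζ ^ 2) * (ξ ^ 2 + η ^ 2 + ζ ^ 2) := by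
          gcongr <;> nlinarith [sq_nonneg ξ, sq_nonneg η]
      _ = (ξ ^ 2 + η ^ 2 + ζ ^ 2) ^ 3 := by ring
  calc decayIntegrand t ξ η ζ ≤ 1 / (ζ ^ 2 * (ξ ^ 2 + ζ ^ 2) * (η ^ 2 + ζ ^ 2)) :=
        div_le_div₀ zero_le_one hexp (by positivity) hprod
    _ = _ := by rw [one_div, mul_inv, mul_inv]

lemma decayIntegrand_le_of_sq_add_sq_le (ht : 0 ≤ t) (hζ : ζ ≠ 0)
    (hr : ξ ^ 2 + η ^ 2 ≤ ζ ^ 2) :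
    decayIntegrand t ξ η ζ ≤
      (ζ ^ 6)⁻¹ * exp (-(t / (4 * ζ ^ 4)) * ξ ^ 2) * exp (-(t / (4 * ζ ^ 4)) * η ^ 2) := by
  have hD : (ξ ^ 2 + η ^ 2 + ζ ^ 2) ^ 2 ≤ 4 * ζ ^ 4 := by nlinarith [sq_nonneg ξ, sq_nonneg η]
  have hexp : exp (-t * (ξ ^ 2 + η ^ 2) / (ξ ^ 2 + η ^ 2 + ζ ^ 2) ^ 2)
      ≤ exp (-(t / (4 * ζ ^ 4)) * ξ ^ 2) * exp (-(t / (4 * ζ ^ 4)) * η ^ 2) := by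
    rw [← exp_add, exp_le_exp]
    calc -t * (ξ ^ 2 + η ^ 2) / (ξ ^ 2 + η ^ 2 + ζ ^ 2) ^ 2
        = -(t * (ξ ^ 2 + η ^ 2) / (ξ ^ 2 + η ^ 2 + ζ ^ 2) ^ 2) := by ring
      _ ≤ -(t * (ξ ^ 2 + η ^ 2) / (4 * ζ ^ 4)) := by gcongr
      _ = _ := by ring
  have hden : ζ ^ 6 ≤ (ξ ^ 2 + η ^ 2 + ζ ^ 2) ^ 3 := by
    rw [show ζ ^ 6 = (ζ ^ 2) ^ 3 by ring]
    gcongr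
    nlinarith [sq_nonneg ξ, sq_nonneg η]
  calc decayIntegrand t ξ η ζ
      ≤ exp (-(t / (4 * ζ ^ 4)) * ξ ^ 2) * exp (-(t / (4 * ζ ^ 4)) * η ^ 2) / ζ ^ 6 :=
        div_le_div₀ (by positivity) hexp (by positivity) hden
    _ = _ := by ring

lemma decayIntegrand_le_of_sq_le_sq_add_sq (ht : 0 < t) (hζ : ζ ≠ 0)
    (hr : ζ ^ 2 ≤ ξ ^ 2 + η ^ 2) :
    decayIntegrand t ξ η ζ ≤ 2 / t * (ξ ^ 2 + ζ ^ 2)⁻¹ * (η ^ 2 + ζ ^ 2)⁻¹ := by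
  have hr0 : 0 < ξ ^ 2 + η ^ 2 := lt_of_lt_of_le (by positivity) hr
  have hprod :
      (ξ ^ 2 + ζ ^ 2) * (η ^ 2 + ζ ^ 2) ≤ 2 * (ξ ^ 2 + η ^ 2) * (ξ ^ 2 + η ^ 2 + ζ ^ 2) := by
    nlinarith [mul_le_mul_of_nonneg_left hr (sq_nonneg ζ), sq_nonneg ξ, sq_nonneg η]
  have hx : 0 < t * (ξ ^ 2 + η ^ 2) / (ξ ^ 2 + η ^ 2 + ζ ^ 2) ^ 2 := by positivity
  have hexp : exp (-t * (ξ ^ 2 + η ^ 2) / (ξ ^ 2 + η ^ 2 + ζ ^ 2) ^ 2)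
      ≤ (t * (ξ ^ 2 + η ^ 2) / (ξ ^ 2 + η ^ 2 + ζ ^ 2) ^ 2)⁻¹ := by
    rw [neg_mul, neg_div]
    exact exp_neg_le_inv hx
  calc decayIntegrand t ξ η ζ
      ≤ (t * (ξ ^ 2 + η ^ 2) / (ξ ^ 2 + η ^ 2 + ζ ^ 2) ^ 2)⁻¹ / (ξ ^ 2 + η ^ 2 + ζ ^ 2) ^ 3 := by
        unfold decayIntegrand
        gcongr
    _ = 1 / (t * (ξ ^ 2 + η ^ 2) * (ξ ^ 2 + η ^ 2 + ζ ^ 2)) := by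
        field_simp
    _ ≤ 2 / (t * ((ξ ^ 2 + ζ ^ 2) * (η ^ 2 + ζ ^ 2))) := by
        rw [div_le_div_iff₀ (by positivity) (by positivity)]
        nlinarith [mul_le_mul_of_nonneg_left hprod ht.le]
    _ = _ := by
        field_simp

lemma decayIntegrand_le (ht : 0 < t) (hζ : ζ ≠ 0) :
    decayIntegrand t ξ η ζ ≤
      (ζ ^ 6)⁻¹ * exp (-(t / (4 * ζ ^ 4)) * ξ ^ 2) * exp (-(t / (4 * ζ ^ 4)) * η ^ 2)
        + 2 / t * (ξ ^ 2 + ζ ^ 2)⁻¹ * (η ^ 2 + ζ ^ 2)⁻¹ := by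
  rcases le_total (ξ ^ 2 + η ^ 2) (ζ ^ 2) with hr | hr
  · exact (decayIntegrand_le_of_sq_add_sq_le ht.le hζ hr).trans (le_add_of_nonneg_right
      (by positivity))
  · exact (decayIntegrand_le_of_sq_le_sq_add_sq ht hζ hr).trans (le_add_of_nonneg_left
      (by positivity))

lemma integral_integral_decayIntegrand_le_of_nonneg (ht : 0 ≤ t) (hζ : 0 < ζ) :
    ∫ ξ, ∫ η, decayIntegrand t ξ η ζ ≤ π ^ 2 / ζ ^ 4 := by
  calc ∫ ξ, ∫ η, decayIntegrand t ξ η ζ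
      ≤ (∫ ξ, (ζ ^ 2)⁻¹ * (ξ ^ 2 + ζ ^ 2)⁻¹) * ∫ η, (η ^ 2 + ζ ^ 2)⁻¹ :=
        integral_integral_le_of_le_mul (fun _ _ => decayIntegrand_nonneg)
          (fun _ _ => decayIntegrand_le_inv_mul_inv_mul_inv ht hζ.ne')
          ((integrable_inv_sq_add_sq hζ.ne').const_mul _) (integrable_inv_sq_add_sq hζ.ne')
    _ = π ^ 2 / ζ ^ 4 := by
        rw [integral_const_mul, integral_univ_inv_sq_add_sq hζ.ne', abs_of_pos hζ]
        field_simp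

lemma integral_integral_decayIntegrand_le_of_pos (ht : 0 < t) (hζ : 0 < ζ) :
    ∫ ξ, ∫ η, decayIntegrand t ξ η ζ ≤ (4 * π + 2 * π ^ 2) / (t * ζ ^ 2) := by
  have hb : 0 < t / (4 * ζ ^ 4) := by positivity
  calc ∫ ξ, ∫ η, decayIntegrand t ξ η ζ
      ≤ (∫ ξ, (ζ ^ 6)⁻¹ * exp (-(t / (4 * ζ ^ 4)) * ξ ^ 2)) *
            (∫ η, exp (-(t / (4 * ζ ^ 4)) * η ^ 2)) +
          (∫ ξ, 2 / t * (ξ ^ 2 + ζ ^ 2)⁻¹) * ∫ η, (η ^ 2 + ζ ^ 2)⁻¹ :=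
        integral_integral_le_of_le_mul_add_mul (fun _ _ => decayIntegrand_nonneg)
          (fun _ _ => decayIntegrand_le ht hζ.ne')
          ((integrable_exp_neg_mul_sq hb).const_mul _)
          ((integrable_inv_sq_add_sq hζ.ne').const_mul _)
          (integrable_exp_neg_mul_sq hb) (integrable_inv_sq_add_sq hζ.ne')
    _ = (4 * π + 2 * π ^ 2) / (t * ζ ^ 2) := by
        rw [integral_const_mul, integral_const_mul, integral_gaussian,
          integral_univ_inv_sq_add_sq hζ.ne', abs_of_pos hζ, mul_assoc,
          mul_self_sqrt (by positivity)]
        field_simp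

lemma integral_integral_decayIntegrand_le (ht : 0 < t) (hζ : π ≤ ζ) :
    ∫ ξ, ∫ η, decayIntegrand t ξ η ζ ≤ (4 * π + 2 * π ^ 2) / max 1 t * (ζ ^ 2)⁻¹ := by
  have hζ0 : 0 < ζ := pi_pos.trans_le hζ
  rcases le_total t 1 with h | h
  · rw [max_eq_left h, div_one]
    calc ∫ ξ, ∫ η, decayIntegrand t ξ η ζ ≤ π ^ 2 / ζ ^ 4 :=
          integral_integral_decayIntegrand_le_of_nonneg ht.le hζ0
      _ = (π / ζ) ^ 2 * (ζ ^ 2)⁻¹ := by ring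
      _ ≤ 1 * (ζ ^ 2)⁻¹ := by
          gcongr
          exact pow_le_one₀ (by positivity) (div_le_one_of_le₀ hζ hζ0.le)
      _ ≤ (4 * π + 2 * π ^ 2) * (ζ ^ 2)⁻¹ := by
          gcongr
          nlinarith [pi_gt_three]
  · rw [max_eq_right h]
    exact (integral_integral_decayIntegrand_le_of_pos ht hζ0).trans_eq (by field_simp)

end DecayIntegrand

/-- Key frequency-space integral estimate: there is C > 0 such that for all t > 0,
∫_{π}^{∞} ∫_{ℝ²} exp(−t(ξ²+η²)/(ξ²+η²+ζ²)²) (ξ²+η²+ζ²)^{−3} dξ dη dζ ≤ C ⟨t⟩^{−1}. -/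
theorem stmt_2 :
    ∃ C : ℝ, 0 < C ∧ ∀ t : ℝ, 0 < t →
      (∫ ζ in Set.Ici (π : ℝ), ∫ ξ : ℝ, ∫ η : ℝ,
          Real.exp (-t * (ξ ^ 2 + η ^ 2) / (ξ ^ 2 + η ^ 2 + ζ ^ 2) ^ 2)
            / (ξ ^ 2 + η ^ 2 + ζ ^ 2) ^ 3) ≤ C * (max 1 t)⁻¹ := by
  refine ⟨4 + 2 * π, by positivity, fun t ht => ?_⟩
  calc ∫ ζ in Set.Ici π, ∫ ξ, ∫ η, decayIntegrand t ξ η ζ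
      ≤ ∫ ζ in Set.Ici π, (4 * π + 2 * π ^ 2) / max 1 t * (ζ ^ 2)⁻¹ :=
        integral_mono_of_nonneg
          (ae_of_all _ fun _ => integral_nonneg fun _ => integral_nonneg fun _ =>
            decayIntegrand_nonneg)
          ((integrableOn_Ici_inv_sq pi_pos).const_mul _)
          ((ae_restrict_mem measurableSet_Ici).mono fun _ hζ =>
            integral_integral_decayIntegrand_le ht hζ)
    _ = (4 + 2 * π) * (max 1 t)⁻¹ := by
        rw [integral_const_mul, integral_Ici_inv_sq pi_pos]
        field_simp
end

section
/- There exists a constant C > 0 such that for all t > 0, ∫_{π}^{∞} ∫_0^{2π} ∫_{3π/4}^{π} exp(−t sin²β / r²) r^{−4} sin β dβ dψ dr ≤ C t^{−1}. -/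
/-!
After the substitution `s = π - β`, Jordan's inequality `2 s / π ≤ sin s ≤ s` bounds the
`β`-integrand by the Gaussian moment `s exp (-4 t s² / (π² r²)) / r⁴`, whose integral is at most
`π² / (8 t r²)`. The `ψ`-integration contributes a factor `2 π`, and `∫_π^∞ r⁻² dr = 1 / π`.
-/

open MeasureTheory Real Set

theorem intervalIntegral_mul_exp_neg_mul_sq_le {a : ℝ} (ha : 0 < a) (L : ℝ) :
    ∫ s in (0 : ℝ)..L, s * exp (-a * s ^ 2) ≤ 1 / (2 * a) := by
  have hderiv : ∀ s : ℝ, HasDerivAt (fun u => -exp (-a * u ^ 2) / (2 * a))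
      (s * exp (-a * s ^ 2)) s := by
    intro s
    have hquad : HasDerivAt (fun u : ℝ => -a * u ^ 2) (-a * (2 * s)) s := by
      simpa using (hasDerivAt_pow 2 s).const_mul (-a)
    refine ((hquad.exp.neg).div_const (2 * a)).congr_deriv ?_
    rw [div_eq_iff (by positivity)]
    ring
  have hint : IntervalIntegrable (fun s : ℝ => s * exp (-a * s ^ 2)) volume 0 L := by
    apply Continuous.intervalIntegrable
    fun_prop
  rw [intervalIntegral.integral_eq_sub_of_hasDerivAt (fun s _ => hderiv s) hint]
  calc _ = (1 - exp (-a * L ^ 2)) / (2 * a) := by norm_num; ring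
    _ ≤ 1 / (2 * a) := by gcongr; linarith [exp_pos (-a * L ^ 2)]

theorem exp_neg_mul_sin_sq_mul_sin_le {c β : ℝ} (hc : 0 ≤ c) (hβ : β ∈ Icc (π / 2) π) :
    exp (-c * sin β ^ 2) * sin β ≤ (π - β) * exp (-(4 * c / π ^ 2) * (π - β) ^ 2) := by
  obtain ⟨hβ₁, hβ₂⟩ := hβ
  have hs₀ : 0 ≤ π - β := by linarith
  have hsin_eq : sin β = sin (π - β) := (sin_pi_sub β).symm
  have hsin_le : sin β ≤ π - β := hsin_eq ▸ sin_le hs₀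
  have hsin_ge : 2 / π * (π - β) ≤ sin β := hsin_eq ▸ mul_le_sin hs₀ (by linarith)
  have hsin_nonneg : 0 ≤ sin β := le_trans (by positivity) hsin_ge
  have hexp : exp (-c * sin β ^ 2) ≤ exp (-(4 * c / π ^ 2) * (π - β) ^ 2) := by
    rw [exp_le_exp]
    have hsq : (2 / π * (π - β)) ^ 2 ≤ sin β ^ 2 := pow_le_pow_left₀ (by positivity) hsin_ge 2
    calc -c * sin β ^ 2 ≤ -c * (2 / π * (π - β)) ^ 2 := by nlinarith
      _ = -(4 * c / π ^ 2) * (π - β) ^ 2 := by field_simp; ring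
  rw [mul_comm]
  exact mul_le_mul hsin_le hexp (exp_pos _).le hs₀

theorem setIntegral_Icc_exp_neg_mul_sin_sq_mul_sin_le {a c : ℝ} (ha : π / 2 ≤ a) (hc : 0 < c) :
    ∫ β in Icc a π, exp (-c * sin β ^ 2) * sin β ≤ π ^ 2 / (8 * c) := by
  rcases lt_or_ge π a with hπa | haπ
  · rw [Icc_eq_empty_of_lt hπa, Measure.restrict_empty, integral_zero_measure]
    positivity
  set b := 4 * c / π ^ 2
  have hb : 0 < b := by positivity
  have hcont : Continuous fun β => (π - β) * exp (-b * (π - β) ^ 2) := by fun_prop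
  calc ∫ β in Icc a π, exp (-c * sin β ^ 2) * sin β
      ≤ ∫ β in Icc a π, (π - β) * exp (-b * (π - β) ^ 2) :=
        setIntegral_mono_on (by fun_prop : Continuous _).integrableOn_Icc hcont.integrableOn_Icc
          measurableSet_Icc fun β hβ =>
            exp_neg_mul_sin_sq_mul_sin_le hc.le ⟨ha.trans hβ.1, hβ.2⟩
    _ = ∫ s in (0 : ℝ)..(π - a), s * exp (-b * s ^ 2) := by
      rw [integral_Icc_eq_integral_Ioc, ← intervalIntegral.integral_of_le haπ,
        intervalIntegral.integral_comp_sub_left (fun s => s * exp (-b * s ^ 2)), sub_self]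
    _ ≤ 1 / (2 * b) := intervalIntegral_mul_exp_neg_mul_sq_le hb _
    _ = π ^ 2 / (8 * c) := by simp only [b]; field_simp; ring

theorem integral_beta_le {t r : ℝ} (ht : 0 < t) (hr : r ≠ 0) :
    ∫ β in Icc (3 * π / 4) π, exp (-t * sin β ^ 2 / r ^ 2) / r ^ 4 * sin β
      ≤ π ^ 2 / (8 * t * r ^ 2) := by
  have hintegrand : ∀ β, exp (-t * sin β ^ 2 / r ^ 2) / r ^ 4 * sin β
      = exp (-(t / r ^ 2) * sin β ^ 2) * sin β / r ^ 4 := fun β => by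
    rw [div_mul_eq_mul_div]
    congr 3
    ring
  simp_rw [hintegrand]
  rw [integral_div]
  calc (∫ β in Icc (3 * π / 4) π, exp (-(t / r ^ 2) * sin β ^ 2) * sin β) / r ^ 4
      ≤ π ^ 2 / (8 * (t / r ^ 2)) / r ^ 4 := by
        gcongr
        exact setIntegral_Icc_exp_neg_mul_sin_sq_mul_sin_le (by linarith [pi_pos]) (by positivity)
    _ = π ^ 2 / (8 * t * r ^ 2) := by field_simp

theorem integral_psi_beta_nonneg (t r : ℝ) :
    0 ≤ ∫ _ in Icc (0 : ℝ) (2 * π), ∫ β in Icc (3 * π / 4) π,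
      exp (-t * sin β ^ 2 / r ^ 2) / r ^ 4 * sin β :=
  setIntegral_nonneg measurableSet_Icc fun _ _ => setIntegral_nonneg measurableSet_Icc fun β hβ =>
    mul_nonneg (by positivity) (sin_nonneg_of_nonneg_of_le_pi (by linarith [hβ.1, pi_pos]) hβ.2)

theorem integral_psi_beta_le {t r : ℝ} (ht : 0 < t) (hr : 0 < r) :
    ∫ _ in Icc (0 : ℝ) (2 * π), ∫ β in Icc (3 * π / 4) π,
      exp (-t * sin β ^ 2 / r ^ 2) / r ^ 4 * sin β ≤ π ^ 3 / (4 * t) * r ^ (-2 : ℝ) := by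
  rw [setIntegral_const, volume_real_Icc_of_le (by positivity), sub_zero, smul_eq_mul]
  calc _ ≤ 2 * π * (π ^ 2 / (8 * t * r ^ 2)) := by
        gcongr
        exact integral_beta_le ht hr.ne'
    _ = π ^ 3 / (4 * t) * r ^ (-2 : ℝ) := by
        rw [rpow_neg hr.le, rpow_two]
        field_simp
        ring

/-- Spherical-coordinates estimate on the angular range β ∈ [3π/4, π]:
∫_{π}^{∞} ∫_0^{2π} ∫_{3π/4}^{π} exp(−t sin²β / r²) r^{−4} sin β dβ dψ dr ≤ C t^{−1} for all t > 0. -/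
theorem stmt_4 :
    ∃ C : ℝ, 0 < C ∧ ∀ t : ℝ, 0 < t →
      (∫ r in Set.Ici (π : ℝ), ∫ ψ in Set.Icc (0:ℝ) (2 * π), ∫ β in Set.Icc (3*π/4) π,
          Real.exp (-t * Real.sin β ^ 2 / r ^ 2) / r ^ 4 * Real.sin β) ≤ C * t⁻¹ := by
  refine ⟨π ^ 2 / 4, by positivity, fun t ht => ?_⟩
  have hintegrable : IntegrableOn (fun r : ℝ => π ^ 3 / (4 * t) * r ^ (-2 : ℝ)) (Ici π) :=
    (integrableOn_Ici_iff_integrableOn_Ioi).mpr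
      ((integrableOn_Ioi_rpow_of_lt (by norm_num) pi_pos).const_mul _)
  calc _ ≤ ∫ r in Ici π, π ^ 3 / (4 * t) * r ^ (-2 : ℝ) :=
        integral_mono_of_nonneg (.of_forall fun r => integral_psi_beta_nonneg t r) hintegrable
          ((ae_restrict_mem measurableSet_Ici).mono fun r (hr : π ≤ r) =>
            integral_psi_beta_le ht (pi_pos.trans_le hr))
    _ = π ^ 2 / 4 * t⁻¹ := by
      rw [integral_Ici_eq_integral_Ioi, integral_const_mul,
        integral_Ioi_rpow_of_lt (by norm_num) pi_pos, show (-2 : ℝ) + 1 = -1 by norm_num,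
        rpow_neg_one]
      field_simp
end

section
/- For all real ξ, η and all integers k ≥ 1, setting ρ = ξ² + η² + π²k² and σ = √(ρ² − 4(ξ²+η²)/ρ), and λ₊ = (−ρ + σ)/2, one has −2(ξ²+η²)/ρ² ≤ λ₊ ≤ −(ξ²+η²)/ρ². -/
open Real

/-!
Writing `c = (ξ² + η²)/ρ`, `λ₊` is the larger root of `λ² + ρλ + c`, and rationalising gives
`λ₊ = -2c / (ρ + σ)`. Since `k ≥ 1` forces `4c ≤ ρ²`, the discriminant is nonnegative and
`0 ≤ σ ≤ ρ`, so `ρ ≤ ρ + σ ≤ 2ρ`, which yields both bounds.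
-/

section QuadraticRoot

variable {ρ c : ℝ}

lemma neg_add_sqrt_discrim_div_two_eq (hρ : 0 < ρ) (hcρ : 4 * c ≤ ρ ^ 2) :
    (-ρ + √(ρ ^ 2 - 4 * c)) / 2 = -(2 * c / (ρ + √(ρ ^ 2 - 4 * c))) := by
  have hσ := sq_sqrt (sub_nonneg.mpr hcρ)
  have hpos : 0 < ρ + √(ρ ^ 2 - 4 * c) := by positivity
  field_simp
  linear_combination hσ

lemma neg_two_mul_div_le_neg_add_sqrt_discrim_div_two (hρ : 0 < ρ) (hc : 0 ≤ c)
    (hcρ : 4 * c ≤ ρ ^ 2) :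
    -2 * c / ρ ≤ (-ρ + √(ρ ^ 2 - 4 * c)) / 2 := by
  rw [neg_add_sqrt_discrim_div_two_eq hρ hcρ, neg_mul, neg_div, neg_le_neg_iff]
  exact div_le_div_of_nonneg_left (by positivity) hρ (le_add_of_nonneg_right (sqrt_nonneg _))

lemma neg_add_sqrt_discrim_div_two_le_neg_div (hρ : 0 < ρ) (hc : 0 ≤ c) (hcρ : 4 * c ≤ ρ ^ 2) :
    (-ρ + √(ρ ^ 2 - 4 * c)) / 2 ≤ -(c / ρ) := by
  have hσρ : √(ρ ^ 2 - 4 * c) ≤ ρ := by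
    rw [sqrt_le_left hρ.le]
    linarith
  rw [neg_add_sqrt_discrim_div_two_eq hρ hcρ, neg_le_neg_iff, ← mul_div_mul_left c ρ two_ne_zero]
  exact div_le_div_of_nonneg_left (by positivity) (by positivity) (by linarith)

end QuadraticRoot

/-- Bounds for the slowly decaying root λ₊ of the dispersion relation:
with ρ = ξ²+η²+π²k², σ = √(ρ² − 4(ξ²+η²)/ρ), λ₊ = (−ρ+σ)/2, one has
−2(ξ²+η²)/ρ² ≤ λ₊ ≤ −(ξ²+η²)/ρ² for k ≥ 1. -/
theorem stmt_5 (ξ η : ℝ) (k : ℕ) (hk : 1 ≤ k)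
    (ρ σ lamP : ℝ)
    (hρ : ρ = ξ ^ 2 + η ^ 2 + π ^ 2 * (k : ℝ) ^ 2)
    (hσ : σ = Real.sqrt (ρ ^ 2 - 4 * (ξ ^ 2 + η ^ 2) / ρ))
    (hlamP : lamP = (-ρ + σ) / 2) :
    -2 * (ξ ^ 2 + η ^ 2) / ρ ^ 2 ≤ lamP ∧ lamP ≤ -((ξ ^ 2 + η ^ 2) / ρ ^ 2) := by
  set A := ξ ^ 2 + η ^ 2
  have hA : 0 ≤ A := by positivity
  have hπk : 9 ≤ π ^ 2 * (k : ℝ) ^ 2 := by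
    have hk' : (1 : ℝ) ≤ k := by exact_mod_cast hk
    have hπ : 9 ≤ π ^ 2 := by nlinarith [pi_gt_three]
    nlinarith [one_le_pow₀ (n := 2) hk']
  have hρpos : 0 < ρ := by linarith
  have hc : 0 ≤ A / ρ := by positivity
  have hcρ : 4 * (A / ρ) ≤ ρ ^ 2 := by
    have : A / ρ ≤ 1 := (div_le_one hρpos).mpr (by linarith)
    nlinarith
  rw [mul_div_assoc] at hσ
  subst hlamP hσ
  constructor
  · simpa only [pow_two, mul_div_assoc, div_div] using
      neg_two_mul_div_le_neg_add_sqrt_discrim_div_two hρpos hc hcρ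
  · simpa only [pow_two, div_div] using
      neg_add_sqrt_discrim_div_two_le_neg_div hρpos hc hcρ
end

section
/- For all real ξ, η, all integers k ≥ 1, and all t ≥ 0: with ρ = ξ²+η²+π²k², σ = √(ρ² − 4(ξ²+η²)/ρ), λ₊ = (−ρ+σ)/2, λ₋ = (−ρ−σ)/2, there is a constant C independent of ξ, η, k, t such that (1/2)(e^{λ₊ t} + e^{λ₋ t}) ≤ C exp(−t(ξ²+η²)/ρ²). -/
/-! Both roots are at most `-(ξ² + η²)/ρ²`, so `C = 1` works: with `q = ξ² + η²`, the square
`(ρ - 2q/ρ²)² = ρ² - 4q/ρ + 4q²/ρ⁴` dominates the discriminant, whence `σ ≤ ρ - 2q/ρ²`. -/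

open Real

lemma sqrt_sq_sub_div_le {ρ q : ℝ} (hρ : 0 < ρ) (h : 2 * q ≤ ρ ^ 3) :
    √(ρ ^ 2 - 4 * q / ρ) ≤ ρ - 2 * q / ρ ^ 2 := by
  have hnonneg : 0 ≤ ρ - 2 * q / ρ ^ 2 := by
    rw [sub_nonneg, div_le_iff₀ (by positivity)]
    linarith
  have hsq : (ρ - 2 * q / ρ ^ 2) ^ 2 = ρ ^ 2 - 4 * q / ρ + (2 * q / ρ ^ 2) ^ 2 := by
    field_simp
    ring
  rw [Real.sqrt_le_iff]
  exact ⟨hnonneg, by nlinarith [sq_nonneg (2 * q / ρ ^ 2)]⟩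

lemma exp_mul_add_exp_mul_div_two_le {a b μ t : ℝ} (ha : a ≤ μ) (hb : b ≤ μ) (ht : 0 ≤ t) :
    (exp (a * t) + exp (b * t)) / 2 ≤ exp (μ * t) := by
  have hat := exp_le_exp.mpr (mul_le_mul_of_nonneg_right ha ht)
  have hbt := exp_le_exp.mpr (mul_le_mul_of_nonneg_right hb ht)
  linarith

/-- Symbol bound for the semigroup operator L₁(t): there is C independent of ξ, η, k, t with
(1/2)(e^{λ₊t} + e^{λ₋t}) ≤ C exp(−t(ξ²+η²)/ρ²) for all k ≥ 1, t ≥ 0. -/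
theorem stmt_8 :
    ∃ C : ℝ, 0 < C ∧ ∀ (ξ η : ℝ) (k : ℕ) (t : ℝ), 1 ≤ k → 0 ≤ t →
      ∀ ρ σ lamP lamM : ℝ,
        ρ = ξ ^ 2 + η ^ 2 + π ^ 2 * (k : ℝ) ^ 2 →
        σ = Real.sqrt (ρ ^ 2 - 4 * (ξ ^ 2 + η ^ 2) / ρ) →
        lamP = (-ρ + σ) / 2 → lamM = (-ρ - σ) / 2 →
        (Real.exp (lamP * t) + Real.exp (lamM * t)) / 2
          ≤ C * Real.exp (-t * (ξ ^ 2 + η ^ 2) / ρ ^ 2) := by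
  refine ⟨1, one_pos, fun ξ η k t hk ht ρ σ lamP lamM hρ hσ hP hM => ?_⟩
  set q := ξ ^ 2 + η ^ 2
  have hq : 0 ≤ q := by positivity
  have hπk : π ^ 2 ≤ π ^ 2 * k ^ 2 :=
    le_mul_of_one_le_right (sq_nonneg π) (one_le_pow₀ (by exact_mod_cast hk))
  have hπ : 2 ≤ π ^ 2 := by nlinarith [pi_gt_three]
  have hqρ : q ≤ ρ := by linarith
  have hρ2 : 2 ≤ ρ := by linarith
  have hcube : 2 * q ≤ ρ ^ 3 := by nlinarith [mul_le_mul hρ2 hρ2 zero_le_two (by linarith)]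
  have hσ_le : σ ≤ ρ - 2 * q / ρ ^ 2 := hσ ▸ sqrt_sq_sub_div_le (by linarith) hcube
  have hσ_nonneg : 0 ≤ σ := hσ ▸ sqrt_nonneg _
  have hP_le : lamP ≤ -q / ρ ^ 2 := by
    linarith [show 2 * q / ρ ^ 2 = -2 * (-q / ρ ^ 2) by ring]
  have hM_le : lamM ≤ -q / ρ ^ 2 := by linarith
  calc (exp (lamP * t) + exp (lamM * t)) / 2 ≤ exp (-q / ρ ^ 2 * t) :=
        exp_mul_add_exp_mul_div_two_le hP_le hM_le ht
    _ = 1 * exp (-t * q / ρ ^ 2) := by rw [one_mul]; ring_nf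
end

section
/- For all real ξ, η, all integers k ≥ 1, and all t ≥ 0: with ρ = ξ²+η²+π²k², σ = √(ρ² − 4(ξ²+η²)/ρ), λ± = (−ρ±σ)/2, there is a constant C independent of ξ, η, k, t such that |(λ₊ e^{λ₊ t} + λ₋ e^{λ₋ t})/2| ≤ C [ ((ξ²+η²)/ρ²) exp(−t(ξ²+η²)/ρ²) + ρ e^{−ρ t/2} ]. -/
/-!
Since `λ₊ λ₋ = q/ρ` with `q = ξ² + η²`, rationalising gives `λ₊ = -2q/(ρ(ρ + σ))`; as
`0 ≤ σ ≤ ρ`, this pins `λ₊` in `[-2q/ρ², -q/ρ²]` and `λ₋` in `[-ρ, -ρ/2]`, and for `λ` in a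
range `[-M, -m]` one has `|λ e^{λt}| ≤ M e^{-mt}`. The constant `C = 1` works.
-/

open Real

theorem abs_mul_exp_mul_le {a m M t : ℝ} (ht : 0 ≤ t) (hm : 0 ≤ m) (hMa : -M ≤ a)
    (ham : a ≤ -m) : |a * exp (a * t)| ≤ M * exp (-m * t) := by
  rw [abs_mul, abs_exp, abs_of_nonpos (by linarith)]
  exact mul_le_mul (by linarith) (exp_le_exp.mpr (by nlinarith)) (exp_pos _).le (by linarith)

section Roots

variable {ρ q σ : ℝ}

theorem le_of_sq_eq_sq_sub_div (hρ : 0 < ρ) (hq : 0 ≤ q) (hσ : 0 ≤ σ)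
    (hσsq : σ ^ 2 = ρ ^ 2 - 4 * q / ρ) : σ ≤ ρ := by
  refine (pow_le_pow_iff_left₀ hσ hρ.le two_ne_zero).1 ?_
  have : 0 ≤ 4 * q / ρ := by positivity
  linarith

theorem neg_add_div_two_eq (hρ : 0 < ρ) (hσ : 0 ≤ σ) (hσsq : σ ^ 2 = ρ ^ 2 - 4 * q / ρ) :
    (-ρ + σ) / 2 = -2 * q / (ρ * (ρ + σ)) := by
  rw [eq_div_iff (by positivity)]
  field_simp at hσsq
  linear_combination hσsq / 2

theorem neg_add_div_two_mem_Icc (hρ : 0 < ρ) (hq : 0 ≤ q) (hσ : 0 ≤ σ)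
    (hσsq : σ ^ 2 = ρ ^ 2 - 4 * q / ρ) :
    -(2 * (q / ρ ^ 2)) ≤ (-ρ + σ) / 2 ∧ (-ρ + σ) / 2 ≤ -(q / ρ ^ 2) := by
  have hσρ := le_of_sq_eq_sq_sub_div hρ hq hσ hσsq
  rw [neg_add_div_two_eq hρ hσ hσsq, ← mul_div_assoc, neg_mul, neg_div, neg_le_neg_iff,
    neg_le_neg_iff]
  constructor
  · rw [div_le_div_iff₀ (by positivity) (by positivity)]
    nlinarith [mul_nonneg (mul_nonneg hq hρ.le) hσ]
  · rw [div_le_div_iff₀ (by positivity) (by positivity)]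
    nlinarith [mul_nonneg (mul_nonneg hq hρ.le) (sub_nonneg.mpr hσρ)]

end Roots

/-- Symbol bound for ∂_t L₁(t): there is C independent of ξ, η, k, t with
|(λ₊e^{λ₊t} + λ₋e^{λ₋t})/2| ≤ C [((ξ²+η²)/ρ²) exp(−t(ξ²+η²)/ρ²) + ρ e^{−ρt/2}] for k ≥ 1, t ≥ 0. -/
theorem stmt_9 :
    ∃ C : ℝ, 0 < C ∧ ∀ (ξ η : ℝ) (k : ℕ) (t : ℝ), 1 ≤ k → 0 ≤ t →
      ∀ ρ σ lamP lamM : ℝ,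
        ρ = ξ ^ 2 + η ^ 2 + π ^ 2 * (k : ℝ) ^ 2 →
        σ = Real.sqrt (ρ ^ 2 - 4 * (ξ ^ 2 + η ^ 2) / ρ) →
        lamP = (-ρ + σ) / 2 → lamM = (-ρ - σ) / 2 →
        |(lamP * Real.exp (lamP * t) + lamM * Real.exp (lamM * t)) / 2|
          ≤ C * ((ξ ^ 2 + η ^ 2) / ρ ^ 2 * Real.exp (-t * (ξ ^ 2 + η ^ 2) / ρ ^ 2)
                + ρ * Real.exp (-ρ * t / 2)) := by
  refine ⟨1, one_pos, fun ξ η k t hk ht ρ σ lamP lamM hρ hσ hP hM => ?_⟩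
  set q := ξ ^ 2 + η ^ 2
  have hq : 0 ≤ q := by positivity
  have hk1 : (1 : ℝ) ≤ k := by exact_mod_cast hk
  have hπk : π ^ 2 ≤ π ^ 2 * k ^ 2 := le_mul_of_one_le_right (by positivity) (one_le_pow₀ hk1)
  have hρ2 : 2 ≤ ρ := by nlinarith [pi_gt_three]
  have hqρ : q ≤ ρ := by rw [hρ]; linarith [sq_nonneg π]
  have hdisc : 0 ≤ ρ ^ 2 - 4 * q / ρ := by
    rw [sub_nonneg, div_le_iff₀ (by linarith)]; nlinarith
  have hσ0 : 0 ≤ σ := hσ ▸ sqrt_nonneg _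
  have hσsq : σ ^ 2 = ρ ^ 2 - 4 * q / ρ := hσ ▸ sq_sqrt hdisc
  have hσρ := le_of_sq_eq_sq_sub_div (by linarith) hq hσ0 hσsq
  obtain ⟨hP_lo, hP_hi⟩ := neg_add_div_two_mem_Icc (by linarith) hq hσ0 hσsq
  have hPexp := abs_mul_exp_mul_le ht (by positivity) (hP ▸ hP_lo) (hP ▸ hP_hi)
  have hMexp := abs_mul_exp_mul_le (a := lamM) (M := ρ) (m := ρ / 2) ht (by linarith)
    (by rw [hM]; linarith) (by rw [hM]; linarith)
  rw [abs_div, abs_two, one_mul, show -t * q / ρ ^ 2 = -(q / ρ ^ 2) * t by ring,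
    show -ρ * t / 2 = -(ρ / 2) * t by ring]
  have hB : 0 ≤ ρ * exp (-(ρ / 2) * t) := by positivity
  linarith [abs_add_le (lamP * exp (lamP * t)) (lamM * exp (lamM * t))]
end
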